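/- Let k ≥ 2 and n ≥ 1 be integers and set θ = ord_k(kn+1). Then θ·i_k(kn+1) = Σ_{d | θ} φ(θ/d)·gcd(k^d − 1, kn+1); that is, i_k(kn+1) = (1/θ)·Σ_{d | θ} φ(θ/d)·gcd(k^d − 1, kn+1). -/

import Mathlib

/-!
Write `θ = ord_k(m)`. Since `e ∣ k ^ d - 1 ↔ ord_k(e) ∣ d`, Gauss's identity `∑_{e ∣ g} φ(e) = g`
gives `gcd(k ^ d - 1, m) = ∑_{e ∣ m, ord_k(e) ∣ d} φ(e)`. Swapping the two sums, the coefficient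
of `φ(e)` is `∑_{d ∣ θ, ord_k(e) ∣ d} φ(θ / d)`, which after `d ↦ θ / d` is
`∑_{t ∣ θ / ord_k(e)} φ(t) = θ / ord_k(e)`; all divisions are exact since `ord_k(e)` divides both
`θ` and `φ(e)`.
-/

open Finset Nat

theorem Nat.sum_totient_filter_dvd (a : ℕ) {m : ℕ} (hm : m ≠ 0) :
    ∑ e ∈ m.divisors with e ∣ a, φ e = Nat.gcd a m := by
  have hfilter : {e ∈ m.divisors | e ∣ a} = {e ∈ m.divisors | e ∣ Nat.gcd a m} :=
    filter_congr fun e he => by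
      simp [Nat.dvd_gcd_iff, (Nat.mem_divisors.mp he).1]
  rw [hfilter, Nat.divisors_filter_dvd_of_dvd hm (Nat.gcd_dvd_right a m), Nat.sum_totient]

theorem Nat.sum_totient_div_filter_dvd {o θ : ℕ} (hθ : θ ≠ 0) (ho : o ∣ θ) :
    ∑ d ∈ θ.divisors with o ∣ d, φ (θ / d) = θ / o := by
  have hswap : ∀ t ∈ θ.divisors, o ∣ θ / t ↔ t ∣ θ / o := fun t ht => by
    rw [Nat.dvd_div_iff_mul_dvd (Nat.mem_divisors.mp ht).1, Nat.dvd_div_iff_mul_dvd ho,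
      mul_comm]
  calc ∑ d ∈ θ.divisors with o ∣ d, φ (θ / d)
      = ∑ d ∈ θ.divisors, if o ∣ θ / (θ / d) then φ (θ / d) else 0 := by
        rw [sum_filter]
        refine sum_congr rfl fun d hd => ?_
        rw [Nat.div_div_self (Nat.mem_divisors.mp hd).1 hθ]
    _ = ∑ t ∈ θ.divisors with t ∣ θ / o, φ t := by
        rw [Nat.sum_div_divisors θ (fun t => if o ∣ θ / t then φ t else 0), sum_filter]
        exact sum_congr rfl fun t ht => if_congr (hswap t ht) rfl rfl
    _ = θ / o := by
        rw [Nat.divisors_filter_dvd_of_dvd hθ (Nat.div_dvd_of_dvd ho), Nat.sum_totient]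

namespace ZMod

theorem dvd_pow_sub_one_iff_orderOf_dvd {k : ℕ} (hk : 0 < k) (e d : ℕ) :
    e ∣ k ^ d - 1 ↔ orderOf (k : ZMod e) ∣ d := by
  rw [orderOf_dvd_iff_pow_eq_one, ← Nat.modEq_iff_dvd' (Nat.one_le_pow _ _ hk), Nat.ModEq.comm,
    ← natCast_eq_natCast_iff, Nat.cast_pow, Nat.cast_one]

theorem orderOf_natCast_dvd_totient {k e : ℕ} (h : k.Coprime e) :
    orderOf (k : ZMod e) ∣ φ e :=
  orderOf_dvd_of_pow_eq_one <| by
    simpa using (natCast_eq_natCast_iff _ _ _).mpr (Nat.ModEq.pow_totient h)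

theorem orderOf_natCast_ne_zero {k e : ℕ} (h : k.Coprime e) (he : e ≠ 0) :
    orderOf (k : ZMod e) ≠ 0 := fun h0 =>
  (Nat.totient_pos.mpr (Nat.pos_of_ne_zero he)).ne'
    (Nat.eq_zero_of_zero_dvd (h0 ▸ orderOf_natCast_dvd_totient h))

theorem orderOf_natCast_dvd_of_dvd (k : ℕ) {e m : ℕ} (h : e ∣ m) :
    orderOf (k : ZMod e) ∣ orderOf (k : ZMod m) := by
  simpa using orderOf_map_dvd (castHom h (ZMod e)).toMonoidHom (k : ZMod m)

end ZMod

theorem gcd_pow_sub_one_eq_sum_totient {k m : ℕ} (hk : 0 < k) (hm : m ≠ 0) (d : ℕ) :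
    Nat.gcd (k ^ d - 1) m = ∑ e ∈ m.divisors with orderOf (k : ZMod e) ∣ d, φ e := by
  simp_rw [← ZMod.dvd_pow_sub_one_iff_orderOf_dvd hk, Nat.sum_totient_filter_dvd _ hm]

theorem orderOf_mul_sum_totient_div_orderOf {k m : ℕ} (hk : 0 < k) (hm : m ≠ 0)
    (hkm : k.Coprime m) :
    orderOf (k : ZMod m) * ∑ e ∈ m.divisors, φ e / orderOf (k : ZMod e) =
      ∑ d ∈ (orderOf (k : ZMod m)).divisors,
        φ (orderOf (k : ZMod m) / d) * Nat.gcd (k ^ d - 1) m := by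
  set θ := orderOf (k : ZMod m)
  have hθ : θ ≠ 0 := ZMod.orderOf_natCast_ne_zero hkm hm
  calc θ * ∑ e ∈ m.divisors, φ e / orderOf (k : ZMod e)
      = ∑ e ∈ m.divisors, φ e * ∑ d ∈ θ.divisors with orderOf (k : ZMod e) ∣ d, φ (θ / d) := by
        rw [mul_sum]
        refine sum_congr rfl fun e he => ?_
        have he' := Nat.mem_divisors.mp he
        have hoθ := ZMod.orderOf_natCast_dvd_of_dvd k he'.1
        rw [Nat.sum_totient_div_filter_dvd hθ hoθ, ← Nat.mul_div_assoc _
          (ZMod.orderOf_natCast_dvd_totient (hkm.coprime_dvd_right he'.1)),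
          mul_comm (φ e), Nat.div_mul_right_comm hoθ]
    _ = ∑ d ∈ θ.divisors, φ (θ / d) * ∑ e ∈ m.divisors with orderOf (k : ZMod e) ∣ d, φ e := by
        simp only [mul_sum, sum_filter, mul_ite, mul_zero]
        rw [sum_comm]
        simp only [mul_comm]
    _ = ∑ d ∈ θ.divisors, φ (θ / d) * Nat.gcd (k ^ d - 1) m := by
        simp_rw [gcd_pow_sub_one_eq_sum_totient hk hm]

theorem ord_mul_ik_eq_sum_general (k n : ℕ) (hk : 2 ≤ k) :
    orderOf (k : ZMod (k * n + 1)) *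
        ∑ d ∈ (k * n + 1).divisors, Nat.totient d / orderOf (k : ZMod d) =
      ∑ d ∈ (orderOf (k : ZMod (k * n + 1))).divisors,
        Nat.totient (orderOf (k : ZMod (k * n + 1)) / d) *
          Nat.gcd (k ^ d - 1) (k * n + 1) :=
  orderOf_mul_sum_totient_div_orderOf (by omega) (Nat.succ_ne_zero _)
    ((Nat.coprime_mul_left_add_right k 1 n).mpr (Nat.coprime_one_right k))

theorem ord_mul_ik_eq_sum (k n : ℕ) (hk : 2 ≤ k) (hn : 1 ≤ n) :
    orderOf (k : ZMod (k * n + 1)) *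
        ∑ d ∈ (k * n + 1).divisors, Nat.totient d / orderOf (k : ZMod d) =
      ∑ d ∈ (orderOf (k : ZMod (k * n + 1))).divisors,
        Nat.totient (orderOf (k : ZMod (k * n + 1)) / d) *
          Nat.gcd (k ^ d - 1) (k * n + 1) :=
  ord_mul_ik_eq_sum_general k n hk
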